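/- arXiv:1501.02846 — 3 statements merged into one kernel-verified Lean document; each statement's English description precedes it below -/
import Mathlib

section
/- Let X be a δ-hyperbolic metric space, x₀ ∈ X, and let g₁, …, g_k be isometries of X such that d(x₀, g_i x₀) ≥ 2(g_j^{ε} x₀ · g_l^{η} x₀)_{x₀} + 18δ + 1 for all 1 ≤ i, j, l ≤ k and all signs ε, η ∈ {±1}, except in the cases j = l with ε = η. Then the orbit map from the group Γ = ⟨g₁, …, g_k⟩ (with the word metric on the generating set {g₁^{±1}, …, g_k^{±1}}) to X, given by g ↦ g x₀, is a quasi-isometric embedding. -/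
/-- The Gromov product `(y ⬝ z)_x = (d(x,y) + d(x,z) - d(y,z))/2`. -/
noncomputable def gromovProd {X : Type*} [MetricSpace X] (x y z : X) : ℝ :=
  (dist x y + dist x z - dist y z) / 2

/-- The word length of `g` with respect to a generating set `S`: the least length of a
word in the elements of `S` representing `g`. -/
noncomputable def wordLength {G : Type*} [Group G] (S : Set G) (g : G) : ℕ :=
  sInf {n | ∃ w : List G, (∀ x ∈ w, x ∈ S) ∧ w.length = n ∧ w.prod = g}

/-!
Write an element of `Γ` as a word `s₁ ⋯ sₙ` of minimal length in the generators. The orbit points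
`yₘ = s₁ ⋯ sₘ x₀` are then a chain whose steps `d(yₘ, yₘ₊₁) = d(x₀, sₘ₊₁ x₀)` are long, while the
hypothesis bounds every turn `(yₘ · yₘ₊₂)_{yₘ₊₁} = (sₘ₊₁⁻¹ x₀ · sₘ₊₂ x₀)_{x₀}` by a constant `c`,
because a minimal word never contains a letter followed by its inverse. By `δ`-hyperbolicity the
Gromov product `(y₀ · yₘ₊₁)_{yₘ}` stays below `c + δ` along the chain, so every step moves `yₘ`
at least one unit further from `y₀`: `d(x₀, g x₀) ≥ |g|`. The upper bound is the triangle
inequality.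
-/

section GromovProduct

def IsGromovHyperbolic (X : Type*) [MetricSpace X] (δ : ℝ) : Prop :=
  ∀ x y z w : X, gromovProd w x z ≥ min (gromovProd w x y) (gromovProd w y z) - δ

variable {X : Type*} [MetricSpace X]

theorem gromovProd_nonneg (x y z : X) : 0 ≤ gromovProd x y z := by
  have := dist_triangle_left y z x
  unfold gromovProd
  linarith

theorem gromovProd_comm (x y z : X) : gromovProd x y z = gromovProd x z y := by
  unfold gromovProd
  rw [dist_comm y z]
  ring

theorem gromovProd_add_gromovProd (x y z : X) :
    gromovProd x y z + gromovProd y x z = dist x y := by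
  unfold gromovProd
  rw [dist_comm y x, dist_comm y z]
  ring

theorem gromovProd_self_left (x z : X) : gromovProd x x z = 0 := by
  simp [gromovProd]

theorem IsometryEquiv.gromovProd_apply (f : X ≃ᵢ X) (x y z : X) :
    gromovProd (f x) (f y) (f z) = gromovProd x y z := by
  simp only [gromovProd, f.dist_eq]

namespace IsGromovHyperbolic

variable {δ : ℝ}

theorem nonneg (hX : IsGromovHyperbolic X δ) (x : X) : 0 ≤ δ := by
  have := hX x x x x
  rw [gromovProd_self_left, min_self] at this
  linarith

-- A small `(o · q)_p` says that `p` lies near a geodesic from `o` to `q`; this propagates one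
-- step along a path `p, q, r` whose step `p q` is long and whose turn at `q` is small.
theorem gromovProd_le_of_turn (hX : IsGromovHyperbolic X δ) {c : ℝ} {o p q r : X}
    (hp : gromovProd p o q ≤ c + δ) (hpq : 2 * (c + δ) < dist p q) (hq : gromovProd q p r ≤ c) :
    gromovProd q o r ≤ c + δ := by
  have hfar : c + δ < gromovProd q p o := by
    have := gromovProd_add_gromovProd q p o
    rw [gromovProd_comm p q o, dist_comm] at this
    linarith
  have := hX p o r q
  rcases min_le_iff.mp (show min (gromovProd q p o) (gromovProd q o r) ≤ c + δ by linarith)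
    with h | h
  · linarith
  · exact h

theorem le_dist_of_chain (hX : IsGromovHyperbolic X δ) {c L : ℝ} (hcδ : 0 ≤ c + δ)
    (hL : 2 * (c + δ) < L) {n : ℕ} {y : ℕ → X}
    (hstep : ∀ m < n, L ≤ dist (y m) (y (m + 1)))
    (hturn : ∀ m, m + 2 ≤ n → gromovProd (y (m + 1)) (y m) (y (m + 2)) ≤ c) :
    n * (L - 2 * (c + δ)) ≤ dist (y 0) (y n) := by
  have key : ∀ m < n, gromovProd (y m) (y 0) (y (m + 1)) ≤ c + δ ∧
      (m + 1) * (L - 2 * (c + δ)) ≤ dist (y 0) (y (m + 1)) := by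
    intro m
    induction m with
    | zero =>
      intro h
      rw [gromovProd_self_left]
      have := hstep 0 h
      push_cast
      constructor <;> linarith
    | succ m ih =>
      intro h
      obtain ⟨hside, hdist⟩ := ih (by omega)
      have hside' := hX.gromovProd_le_of_turn hside
        (by linarith [hstep m (by omega)]) (hturn m (by omega))
      refine ⟨hside', ?_⟩
      have := hstep (m + 1) h
      simp only [gromovProd, dist_comm (y (m + 1)) (y 0)] at hside'
      push_cast
      linarith
  cases n with
  | zero => simp
  | succ m => simpa using (key m m.lt_succ_self).2

end IsGromovHyperbolic

end GromovProduct

section Words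

variable {G : Type*} [Group G] {S : Set G}

theorem exists_list_prod_eq_of_mem_closure (hS : ∀ s ∈ S, s⁻¹ ∈ S) {g : G}
    (hg : g ∈ Subgroup.closure S) : ∃ w : List G, (∀ s ∈ w, s ∈ S) ∧ w.prod = g := by
  have hSS : S ∪ S⁻¹ = S := Set.union_eq_left.mpr fun s hs => by simpa using hS _ hs
  rw [← Subgroup.mem_toSubmonoid, Subgroup.closure_toSubmonoid, hSS] at hg
  exact Submonoid.exists_list_of_mem_closure hg

theorem exists_list_length_eq_wordLength (hS : ∀ s ∈ S, s⁻¹ ∈ S) {g : G}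
    (hg : g ∈ Subgroup.closure S) :
    ∃ w : List G, (∀ s ∈ w, s ∈ S) ∧ w.length = wordLength S g ∧ w.prod = g := by
  obtain ⟨w, hwS, hw⟩ := exists_list_prod_eq_of_mem_closure hS hg
  exact Nat.sInf_mem (s := {n | ∃ w : List G, (∀ s ∈ w, s ∈ S) ∧ w.length = n ∧ w.prod = g})
    ⟨w.length, w, hwS, rfl, hw⟩

theorem wordLength_prod_le {w : List G} (hw : ∀ s ∈ w, s ∈ S) : wordLength S w.prod ≤ w.length :=
  Nat.sInf_le ⟨w, hw, rfl, rfl⟩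

theorem getElem_succ_ne_inv_of_length_eq_wordLength {w : List G} (hw : ∀ s ∈ w, s ∈ S)
    (hmin : w.length = wordLength S w.prod) (m : ℕ) (h : m + 2 ≤ w.length) :
    w[m + 1] ≠ w[m]⁻¹ := by
  intro hcancel
  set w' := w.take m ++ w.drop (m + 2)
  have hsplit : w = w.take m ++ w[m] :: w[m + 1] :: w.drop (m + 2) := by
    rw [← List.drop_eq_getElem_cons (i := m + 1), ← List.drop_eq_getElem_cons,
      List.take_append_drop]
  have hprod : w'.prod = w.prod := by
    conv_rhs => rw [hsplit]
    simp [w', hcancel]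
  have hw' : ∀ s ∈ w', s ∈ S := fun s hs => by
    rcases List.mem_append.mp hs with hs | hs
    exacts [hw s (List.mem_of_mem_take hs), hw s (List.mem_of_mem_drop hs)]
  have := wordLength_prod_le hw'
  simp only [hprod, ← hmin, w', List.length_append, List.length_take, List.length_drop] at this
  omega

end Words

section SymmetrizedRange

def symmetrizedRange {ι G : Type*} [Group G] (g : ι → G) : Set G :=
  {s | ∃ i, s = g i ∨ s = (g i)⁻¹}

variable {ι G : Type*} [Group G] {g : ι → G} {s : G}

theorem inv_mem_symmetrizedRange (hs : s ∈ symmetrizedRange g) : s⁻¹ ∈ symmetrizedRange g := by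
  obtain ⟨i, rfl | rfl⟩ := hs
  exacts [⟨i, Or.inr rfl⟩, ⟨i, Or.inl (inv_inv _)⟩]

theorem exists_eq_ite_of_mem_symmetrizedRange (hs : s ∈ symmetrizedRange g) :
    ∃ i, ∃ ε : Bool, s = if ε then g i else (g i)⁻¹ := by
  obtain ⟨i, rfl | rfl⟩ := hs
  exacts [⟨i, true, rfl⟩, ⟨i, false, rfl⟩]

end SymmetrizedRange

section Orbit

variable {X : Type*} [MetricSpace X]

theorem IsometryEquiv.dist_apply_apply (a b : X ≃ᵢ X) (x : X) :
    dist (a x) (b x) = dist x ((a⁻¹ * b) x) := by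
  rw [← a⁻¹.dist_eq, IsometryEquiv.inv_apply_self, IsometryEquiv.mul_apply]

theorem IsometryEquiv.dist_inv_apply (e : X ≃ᵢ X) (x : X) : dist x (e⁻¹ x) = dist x (e x) := by
  rw [← e.dist_eq, IsometryEquiv.apply_inv_self, dist_comm]

theorem dist_list_prod_apply_le {x : X} {K : ℝ} :
    ∀ {w : List (X ≃ᵢ X)}, (∀ s ∈ w, dist x (s x) ≤ K) → dist x (w.prod x) ≤ w.length * K
  | [], _ => by simp
  | s :: w, h => by
    have hw := dist_list_prod_apply_le fun t ht => h t (List.mem_cons_of_mem s ht)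
    calc dist x ((s :: w).prod x) ≤ dist x (s x) + dist (s x) (s (w.prod x)) := dist_triangle ..
      _ ≤ K + w.length * K := by rw [s.dist_eq]; exact add_le_add (h s List.mem_cons_self) hw
      _ = (s :: w).length * K := by rw [List.length_cons]; push_cast; ring

theorem IsGromovHyperbolic.le_dist_list_prod_apply {δ c L : ℝ} (hX : IsGromovHyperbolic X δ)
    (hcδ : 0 ≤ c + δ) (hL : 2 * (c + δ) < L) {x : X} {w : List (X ≃ᵢ X)}
    (hstep : ∀ s ∈ w, L ≤ dist x (s x))
    (hturn : ∀ m (h : m + 2 ≤ w.length), gromovProd x (w[m]⁻¹ x) (w[m + 1] x) ≤ c) :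
    w.length * (L - 2 * (c + δ)) ≤ dist x (w.prod x) := by
  have hy : ∀ m (h : m < w.length), (w.take (m + 1)).prod x = (w.take m).prod (w[m] x) := by
    intro m h
    rw [List.prod_take_succ _ _ h, IsometryEquiv.mul_apply]
  have := hX.le_dist_of_chain hcδ hL (y := fun m => (w.take m).prod x) (n := w.length)
    (fun m hm => by
      simp only [hy m hm, IsometryEquiv.dist_eq]
      exact hstep _ (List.getElem_mem _))
    (fun m hm => by
      set Q := (w.take m).prod * w[m]
      have h0 : (w.take m).prod x = Q (w[m]⁻¹ x) := by simp [Q, IsometryEquiv.mul_apply]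
      have h1 : (w.take (m + 1)).prod x = Q x := hy m (by omega)
      have h2 : (w.take (m + 2)).prod x = Q (w[m + 1] x) := by
        rw [hy (m + 1) hm, List.prod_take_succ _ _ (by omega)]
      rw [h0, h1, h2, Q.gromovProd_apply]
      exact hturn m hm)
  simpa using this

theorem IsGromovHyperbolic.wordLength_le_dist {δ c L : ℝ} (hX : IsGromovHyperbolic X δ)
    (hcδ : 0 ≤ c + δ) (hL : 2 * (c + δ) + 1 ≤ L) {S : Set (X ≃ᵢ X)} (hS : ∀ s ∈ S, s⁻¹ ∈ S)
    {x : X} (hstep : ∀ s ∈ S, L ≤ dist x (s x))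
    (hturn : ∀ u ∈ S, ∀ v ∈ S, v ≠ u⁻¹ → gromovProd x (u⁻¹ x) (v x) ≤ c)
    {g : X ≃ᵢ X} (hg : g ∈ Subgroup.closure S) : (wordLength S g : ℝ) ≤ dist x (g x) := by
  obtain ⟨w, hwS, hlen, rfl⟩ := exists_list_length_eq_wordLength hS hg
  have := hX.le_dist_list_prod_apply hcδ (by linarith) (fun s hs => hstep s (hwS s hs))
    fun m hm => hturn _ (hwS _ (List.getElem_mem _)) _ (hwS _ (List.getElem_mem _))
      (getElem_succ_ne_inv_of_length_eq_wordLength hwS hlen m hm)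
  rw [← hlen]
  nlinarith [(w.length.cast_nonneg : (0 : ℝ) ≤ w.length)]

theorem dist_apply_le_wordLength_mul {S : Set (X ≃ᵢ X)} (hS : ∀ s ∈ S, s⁻¹ ∈ S) {x : X} {K : ℝ}
    (hK : ∀ s ∈ S, dist x (s x) ≤ K) {g : X ≃ᵢ X} (hg : g ∈ Subgroup.closure S) :
    dist x (g x) ≤ wordLength S g * K := by
  obtain ⟨w, hwS, hlen, rfl⟩ := exists_list_length_eq_wordLength hS hg
  rw [← hlen]
  exact dist_list_prod_apply_le fun s hs => hK s (hwS s hs)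

end Orbit

section Generators

variable {X : Type*} [MetricSpace X] {ι : Type*} [Finite ι]

theorem exists_dist_apply_le (x : X) (g : ι → X ≃ᵢ X) :
    ∃ K, 1 ≤ K ∧ ∀ s ∈ symmetrizedRange g, dist x (s x) ≤ K := by
  obtain ⟨M, hM⟩ := Finite.bddAbove_range fun i => dist x (g i x)
  refine ⟨max 1 M, le_max_left _ _, ?_⟩
  rintro s ⟨i, rfl | rfl⟩
  · exact (hM ⟨i, rfl⟩).trans (le_max_right _ _)
  · rw [IsometryEquiv.dist_inv_apply]
    exact (hM ⟨i, rfl⟩).trans (le_max_right _ _)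

-- The turn bound `c` is read off the generator that moves `x` least.
theorem exists_gromovProd_le_of_forall_le_dist (x : X) (g : ι → X ≃ᵢ X) {D : ℝ}
    (hyp : ∀ (i j l : ι) (ε η : Bool), (j ≠ l ∨ ε ≠ η) →
      dist x (g i x) ≥
        2 * gromovProd x ((if ε then g j else (g j)⁻¹) x) ((if η then g l else (g l)⁻¹) x) + D) :
    ∃ c, 0 ≤ c ∧ (∀ s ∈ symmetrizedRange g, 2 * c + D ≤ dist x (s x)) ∧
      ∀ u ∈ symmetrizedRange g, ∀ v ∈ symmetrizedRange g, v ≠ u⁻¹ →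
        gromovProd x (u⁻¹ x) (v x) ≤ c := by
  rcases isEmpty_or_nonempty ι with hι | hι
  · exact ⟨0, le_rfl, fun s ⟨i, _⟩ => isEmptyElim i, fun u ⟨i, _⟩ => isEmptyElim i⟩
  obtain ⟨i₀, hi₀⟩ := Finite.exists_min fun i => dist x (g i x)
  refine ⟨(dist x (g i₀ x) - D) / 2, ?_, ?_, ?_⟩
  · have := hyp i₀ i₀ i₀ true false (by simp)
    simp only [↓reduceIte, Bool.false_eq_true] at this
    linarith [gromovProd_nonneg x (g i₀ x) ((g i₀)⁻¹ x)]
  · rintro s ⟨i, rfl | rfl⟩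
    · linarith [hi₀ i]
    · rw [IsometryEquiv.dist_inv_apply]
      linarith [hi₀ i]
  · intro u hu v hv hne
    obtain ⟨j, ε, hj⟩ := exists_eq_ite_of_mem_symmetrizedRange (inv_mem_symmetrizedRange hu)
    obtain ⟨l, η, hl⟩ := exists_eq_ite_of_mem_symmetrizedRange hv
    have hadm : j ≠ l ∨ ε ≠ η := by
      by_contra! h
      obtain ⟨rfl, rfl⟩ := h
      exact hne (hl.trans hj.symm)
    have := hyp i₀ j l ε η hadm
    rw [hj, hl]
    linarith

end Generators

theorem orbit_map_qi_embedding {X : Type*} [MetricSpace X] (δ : ℝ)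
    (hδ : ∀ x y z w : X, gromovProd w x z ≥ min (gromovProd w x y) (gromovProd w y z) - δ)
    (x₀ : X) (k : ℕ) (g : Fin k → (X ≃ᵢ X))
    (hyp : ∀ (i j l : Fin k) (ε η : Bool), (j ≠ l ∨ ε ≠ η) →
      dist x₀ (g i x₀) ≥
        2 * gromovProd x₀ ((if ε then g j else (g j)⁻¹) x₀)
            ((if η then g l else (g l)⁻¹) x₀) + 18 * δ + 1) :
    let S : Set (X ≃ᵢ X) := {s | ∃ i, s = g i ∨ s = (g i)⁻¹}
    ∃ K C : ℝ, 1 ≤ K ∧ 0 ≤ C ∧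
      ∀ a ∈ Subgroup.closure S, ∀ b ∈ Subgroup.closure S,
        (1 / K) * (wordLength S (a⁻¹ * b) : ℝ) - C ≤ dist (a x₀) (b x₀) ∧
          dist (a x₀) (b x₀) ≤ K * (wordLength S (a⁻¹ * b) : ℝ) + C := by
  intro S
  have hS : ∀ s ∈ S, s⁻¹ ∈ S := fun _ => inv_mem_symmetrizedRange
  obtain ⟨c, hc, hstep, hturn⟩ :=
    exists_gromovProd_le_of_forall_le_dist x₀ g (D := 18 * δ + 1)
      (by simpa only [add_assoc] using hyp)
  obtain ⟨K, hK1, hK⟩ := exists_dist_apply_le x₀ g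
  have hδ0 := IsGromovHyperbolic.nonneg hδ x₀
  refine ⟨K, 0, hK1, le_rfl, fun a ha b hb => ?_⟩
  have hab : a⁻¹ * b ∈ Subgroup.closure S := mul_mem (inv_mem ha) hb
  have lower :=
    IsGromovHyperbolic.wordLength_le_dist hδ (by linarith) (by linarith) hS hstep hturn hab
  have upper := dist_apply_le_wordLength_mul hS hK hab
  have hK_inv : 1 / K * wordLength S (a⁻¹ * b) ≤ wordLength S (a⁻¹ * b) := by
    rw [one_div_mul_eq_div]
    exact div_le_self (Nat.cast_nonneg _) hK1
  rw [IsometryEquiv.dist_apply_apply]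
  constructor <;> linarith
end

section
/- Let G be a countable group acting by isometries on a δ-hyperbolic space X with basepoint x₀, and let wₙ and uₙ be independent G-valued random variables with distributions μₙ and μ̌ₙ respectively. Suppose there is a function f with f(r) → 0 as r → ∞ such that μₙ(S) ≤ f(r) for every shadow S = S_{x₀}(g x₀, R) with distance parameter d(x₀, g x₀) − R ≥ r. Then for any function l : ℕ → ℕ with l(n) → ∞, one has P[(wₙ x₀ · uₙ⁻¹ x₀)_{x₀} ≤ l(n)] → 1 as n → ∞. -/
open MeasureTheory ProbabilityTheory Filter
open scoped ENNReal

/-- The shadow `S_p(q, R) = { y : (q ⬝ y)_p ≥ d(p,q) - R }`. -/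
def shadow {X : Type*} [MetricSpace X] (p q : X) (R : ℝ) : Set X :=
  {y | gromovProd p q y ≥ dist p q - R}

/-!
Given `wₙ = g`, the event `(wₙ x₀ · uₙ⁻¹ x₀)_{x₀} > r` says that `uₙ⁻¹ x₀` lies in the shadow
`S_{x₀}(g x₀, d(x₀, g x₀) - r)`, whose distance parameter is `r`; as `uₙ⁻¹` has law `μₙ`, this
has probability at most `f r`. Independence lets us integrate this bound over the law of `wₙ`
(Fubini), so the event has probability at most `f (l n) → 0`.
-/

lemma setOf_lt_gromovProd_subset_shadow {X : Type*} [MetricSpace X] (p q : X) (r : ℝ) :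
    {y | r < gromovProd p q y} ⊆ shadow p q (dist p q - r) := fun y hy => by
  simp only [shadow, Set.mem_ofPred_eq] at hy ⊢
  linarith

lemma MeasureTheory.Measure.map_inv_eq_of_map_eq_map_inv {Ω G : Type*} [MeasurableSpace Ω] [InvolutiveInv G]
    [MeasurableSpace G] [MeasurableInv G] {P : Measure Ω} {u : Ω → G} (hu : Measurable u)
    {ν : Measure G} (h : P.map u = ν.map (fun x => x⁻¹)) :
    P.map (fun ω => (u ω)⁻¹) = ν := by
  change P.map (Inv.inv ∘ u) = ν
  rw [← Measure.map_map measurable_inv hu, h]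
  exact ν.inv_inv

lemma ProbabilityTheory.IndepFun.measure_mem_le_of_forall_map_section_le {Ω α β : Type*}
    [MeasurableSpace Ω] [MeasurableSpace α] [MeasurableSpace β]
    {P : Measure Ω} [IsProbabilityMeasure P]
    {X : Ω → α} {Y : Ω → β} (hX : Measurable X) (hY : Measurable Y) (hXY : IndepFun X Y P)
    {s : Set (α × β)} (hs : MeasurableSet s) {c : ℝ≥0∞}
    (hc : ∀ x, P.map Y (Prod.mk x ⁻¹' s) ≤ c) :
    P {ω | (X ω, Y ω) ∈ s} ≤ c := by
  have : IsProbabilityMeasure (P.map X) := Measure.isProbabilityMeasure_map hX.aemeasurable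
  calc P {ω | (X ω, Y ω) ∈ s}
      = (P.map X).prod (P.map Y) s := by
        rw [← (indepFun_iff_map_prod_eq_prod_map_map hX.aemeasurable hY.aemeasurable).mp hXY,
          Measure.map_apply (hX.prodMk hY) hs]
        rfl
    _ = ∫⁻ x, P.map Y (Prod.mk x ⁻¹' s) ∂P.map X := Measure.prod_apply hs
    _ ≤ ∫⁻ _, c ∂P.map X := lintegral_mono hc
    _ = c := by simp

lemma tendsto_measure_compl_one_of_tendsto_zero {Ω ι : Type*} [MeasurableSpace Ω]
    {P : Measure Ω} [IsProbabilityMeasure P] {l : Filter ι} {s : ι → Set Ω}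
    (hs : ∀ i, MeasurableSet (s i)) (h : Tendsto (fun i => P (s i)) l (nhds 0)) :
    Tendsto (fun i => P (s i)ᶜ) l (nhds 1) := by
  simp_rw [prob_compl_eq_one_sub (hs _)]
  simpa using ENNReal.Tendsto.sub tendsto_const_nhds h (Or.inl ENNReal.one_ne_top)

theorem gromov_product_of_independent_walks_small_general
    {G : Type*} [Group G] [Countable G] [MeasurableSpace G] [DiscreteMeasurableSpace G]
    {X : Type*} [MetricSpace X]
    [MulAction G X] (x₀ : X)
    {Ω : Type*} [MeasurableSpace Ω] (P : Measure Ω) [IsProbabilityMeasure P]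
    (w u : ℕ → Ω → G) (hwmeas : ∀ n, Measurable (w n)) (humeas : ∀ n, Measurable (u n))
    (hindep : ∀ n, IndepFun (w n) (u n) P)
    (ν : ℕ → Measure G)
    -- `u n` has law `μ̌ₙ`, the reflection of `νₙ`
    (hlawu : ∀ n, Measure.map (u n) P = Measure.map (fun x : G => x⁻¹) (ν n))
    -- decay of shadows
    (f : ℝ → ℝ) (hf : Tendsto f atTop (nhds 0))
    (hshadow : ∀ (n : ℕ) (r R : ℝ) (g : G), dist x₀ (g • x₀) - R ≥ r →
      ν n {h : G | h • x₀ ∈ shadow x₀ (g • x₀) R} ≤ ENNReal.ofReal (f r))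
    (l : ℕ → ℕ) (hl : Tendsto l atTop atTop) :
    Tendsto (fun n =>
        P {ω | gromovProd x₀ (w n ω • x₀) ((u n ω)⁻¹ • x₀) ≤ (l n : ℝ)})
      atTop (nhds 1) := by
  let far (r : ℝ) : Set (G × G) := {p | r < gromovProd x₀ (p.1 • x₀) (p.2 • x₀)}
  have hfar_le (n : ℕ) :
      P {ω | (w n ω, (u n ω)⁻¹) ∈ far (l n)} ≤ ENNReal.ofReal (f (l n)) := by
    refine ((hindep n).comp measurable_id measurable_inv).measure_mem_le_of_forall_map_section_le
      (Y := fun ω => (u n ω)⁻¹) (hwmeas n) (humeas n).inv .of_discrete fun g => ?_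
    rw [Measure.map_inv_eq_of_map_eq_map_inv (humeas n) (hlawu n)]
    refine (measure_mono fun h hh => ?_).trans (hshadow n (l n) _ g (sub_sub_cancel _ _).ge)
    exact setOf_lt_gromovProd_subset_shadow x₀ (g • x₀) (l n) hh
  have hfar_zero :
      Tendsto (fun n => P {ω | (w n ω, (u n ω)⁻¹) ∈ far (l n)}) atTop (nhds 0) :=
    tendsto_of_tendsto_of_tendsto_of_le_of_le tendsto_const_nhds
      (by simpa using ENNReal.tendsto_ofReal (hf.comp (tendsto_natCast_atTop_atTop.comp hl)))
      (fun _ => zero_le) hfar_le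
  simpa [far, Set.compl_ofPred] using tendsto_measure_compl_one_of_tendsto_zero
    (fun n => ((hwmeas n).prodMk (humeas n).inv) (.of_discrete (s := far (l n)))) hfar_zero

theorem gromov_product_of_independent_walks_small
    {G : Type*} [Group G] [Countable G] [MeasurableSpace G] [DiscreteMeasurableSpace G]
    {X : Type*} [MetricSpace X] (δ : ℝ)
    (hδ : ∀ x y z w : X, gromovProd w x z ≥ min (gromovProd w x y) (gromovProd w y z) - δ)
    [MulAction G X] (hisom : ∀ g : G, Isometry (fun x : X => g • x)) (x₀ : X)
    {Ω : Type*} [MeasurableSpace Ω] (P : Measure Ω) [IsProbabilityMeasure P]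
    (w u : ℕ → Ω → G) (hwmeas : ∀ n, Measurable (w n)) (humeas : ∀ n, Measurable (u n))
    (hindep : ∀ n, IndepFun (w n) (u n) P)
    (ν : ℕ → Measure G) (hν : ∀ n, IsProbabilityMeasure (ν n))
    (hlaww : ∀ n, Measure.map (w n) P = ν n)
    -- `u n` has law `μ̌ₙ`, the reflection of `νₙ`
    (hlawu : ∀ n, Measure.map (u n) P = Measure.map (fun x : G => x⁻¹) (ν n))
    -- decay of shadows
    (f : ℝ → ℝ) (hf : Tendsto f atTop (nhds 0))
    (hshadow : ∀ (n : ℕ) (r R : ℝ) (g : G), dist x₀ (g • x₀) - R ≥ r →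
      ν n {h : G | h • x₀ ∈ shadow x₀ (g • x₀) R} ≤ ENNReal.ofReal (f r))
    (l : ℕ → ℕ) (hl : Tendsto l atTop atTop) :
    Tendsto (fun n =>
        P {ω | gromovProd x₀ (w n ω • x₀) ((u n ω)⁻¹ • x₀) ≤ (l n : ℝ)})
      atTop (nhds 1) :=
  gromov_product_of_independent_walks_small_general x₀ P w u hwmeas humeas hindep ν hlawu f hf
    hshadow l hl
end

section
/- Let G be a countable group acting by isometries on a δ-hyperbolic space X with basepoint x₀, and suppose wₙ and uₘ are independent G-valued random variables with laws μₘ and μ_{n−m}. Writing wₙ = w_m u_m (where m = ⌊n/2⌋), suppose: decay of shadows holds with function f; and P[d(x₀, w_m x₀) ≥ l(n) + εn] → 1 for some ε > 0. Then P[(wₙ x₀ · w_m x₀)_{x₀} ≥ l(n)] → 1 as n → ∞. -/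
open MeasureTheory ProbabilityTheory Filter

/-!
For `g, h ∈ G` acting by isometries,
`(gh x₀ · g x₀)_{x₀} + (g⁻¹ x₀ · h x₀)_{x₀} = d(x₀, g x₀)`.
So once `d(x₀, w_m x₀) ≥ l(n) + εn`, the Gromov product `(wₙ x₀ · w_m x₀)_{x₀}` can only drop
below `l(n)` if `u_m x₀` lies in the shadow of `w_m⁻¹ x₀` with distance parameter `εn`.
Conditioning on `w_m` and using independence, this has probability at most `f(εn) → 0`.
-/

section GromovProduct

variable {G X : Type*} [Group G] [MetricSpace X] [MulAction G X] [IsIsometricSMul G X]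

lemma dist_inv_smul_eq_dist_smul (x₀ : X) (g : G) : dist x₀ (g⁻¹ • x₀) = dist x₀ (g • x₀) := by
  rw [← dist_smul g, smul_inv_smul, dist_comm]

lemma gromovProd_mul_smul_add_gromovProd_inv_smul (x₀ : X) (g h : G) :
    gromovProd x₀ ((g * h) • x₀) (g • x₀) + gromovProd x₀ (g⁻¹ • x₀) (h • x₀)
      = dist x₀ (g • x₀) := by
  have hgh : dist x₀ ((g * h) • x₀) = dist (g⁻¹ • x₀) (h • x₀) := by
    rw [← dist_smul g (g⁻¹ • x₀), smul_inv_smul, mul_smul]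
  have hg : dist ((g * h) • x₀) (g • x₀) = dist x₀ (h • x₀) := by
    rw [mul_smul, dist_smul, dist_comm]
  simp only [gromovProd, hgh, hg, dist_inv_smul_eq_dist_smul]
  ring

lemma mem_shadow_of_gromovProd_mul_smul_lt {x₀ : X} {g h : G} {L t : ℝ}
    (hg : L + t ≤ dist x₀ (g • x₀)) (hgh : gromovProd x₀ ((g * h) • x₀) (g • x₀) < L) :
    h • x₀ ∈ shadow x₀ (g⁻¹ • x₀) (dist x₀ (g⁻¹ • x₀) - t) := by
  have := gromovProd_mul_smul_add_gromovProd_inv_smul x₀ g h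
  simp only [shadow, Set.mem_ofPred_eq, sub_sub_cancel]
  linarith

end GromovProduct

lemma ProbabilityTheory.IndepFun.measure_mem_le {Ω α β : Type*} [MeasurableSpace Ω]
    {P : Measure Ω} [IsProbabilityMeasure P] [Countable α] [MeasurableSpace α]
    [MeasurableSingletonClass α] [MeasurableSpace β] {X : Ω → α} {Y : Ω → β}
    (hX : Measurable X) (hXY : IndepFun X Y P) {T : α → Set β}
    (hT : ∀ a, MeasurableSet (T a)) {c : ENNReal} (hc : ∀ a, P (Y ⁻¹' T a) ≤ c) :
    P {ω | Y ω ∈ T (X ω)} ≤ c := by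
  have hfibers : {ω | Y ω ∈ T (X ω)} = ⋃ a, X ⁻¹' {a} ∩ Y ⁻¹' T a := by
    ext ω; simp
  calc P {ω | Y ω ∈ T (X ω)}
      ≤ ∑' a, P (X ⁻¹' {a} ∩ Y ⁻¹' T a) := hfibers ▸ measure_iUnion_le _
    _ = ∑' a, P (X ⁻¹' {a}) * P (Y ⁻¹' T a) := by
        refine tsum_congr fun a => ?_
        exact hXY.measure_inter_preimage_eq_mul _ _ (measurableSet_singleton a) (hT a)
    _ ≤ ∑' a, P (X ⁻¹' {a}) * c := by gcongr with a; exact hc a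
    _ = P (⋃ a, X ⁻¹' {a}) * c := by
        rw [ENNReal.tsum_mul_right,
          measure_iUnion (pairwise_disjoint_fiber X) fun a => hX (measurableSet_singleton a)]
    _ ≤ c := mul_le_of_le_one_left' prob_le_one

lemma ENNReal.tendsto_nhds_one_of_le_add {ι : Type*} {L : Filter ι} {a b e : ι → ENNReal}
    (ha : Tendsto a L (nhds 1)) (he : Tendsto e L (nhds 0)) (hb : ∀ i, b i ≤ 1)
    (hab : ∀ i, a i ≤ b i + e i) : Tendsto b L (nhds 1) := by
  have hlow : Tendsto (fun i => a i - e i) L (nhds 1) := by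
    simpa using ENNReal.Tendsto.sub ha he (Or.inl ENNReal.one_ne_top)
  exact tendsto_of_tendsto_of_tendsto_of_le_of_le hlow tendsto_const_nhds
    (fun i => tsub_le_iff_right.2 (hab i)) hb

theorem gromov_product_with_midpoint_large_general
    {G : Type*} [Group G] [Countable G] [MeasurableSpace G] [DiscreteMeasurableSpace G]
    {X : Type*} [MetricSpace X]
    [MulAction G X] (hisom : ∀ g : G, Isometry (fun x : X => g • x)) (x₀ : X)
    {Ω : Type*} [MeasurableSpace Ω] (P : Measure Ω) [IsProbabilityMeasure P]
    (wm um : ℕ → Ω → G)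
    (hwmeas : ∀ n, Measurable (wm n)) (humeas : ∀ n, Measurable (um n))
    (hindep : ∀ n, IndepFun (wm n) (um n) P)
    (μfam : ℕ → Measure G)
    -- `wm n` is the walk at time `m = ⌊n/2⌋` and `um n` the independent increment with
    -- law `μ_{n-m}`
    (hlawum : ∀ n, Measure.map (um n) P = μfam (n - n / 2))
    -- decay of shadows: both `μ_j` and `μ̌_j` give small measure to shadows with large
    -- distance parameter
    (f : ℝ → ℝ) (hf : Tendsto f atTop (nhds 0))
    (hshadow : ∀ (j : ℕ) (r R : ℝ) (g : G), dist x₀ (g • x₀) - R ≥ r →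
      μfam j {h : G | h • x₀ ∈ shadow x₀ (g • x₀) R} ≤ ENNReal.ofReal (f r) ∧
      μfam j {h : G | h⁻¹ • x₀ ∈ shadow x₀ (g • x₀) R} ≤ ENNReal.ofReal (f r))
    (l : ℕ → ℕ) (ε : ℝ) (hε : 0 < ε)
    (hprog : Tendsto (fun n =>
        P {ω | dist x₀ (wm n ω • x₀) ≥ (l n : ℝ) + ε * n}) atTop (nhds 1)) :
    Tendsto (fun n =>
        P {ω | gromovProd x₀ ((wm n ω * um n ω) • x₀) (wm n ω • x₀) ≥ (l n : ℝ)})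
      atTop (nhds 1) := by
  have : IsIsometricSMul G X := ⟨hisom⟩
  let shadowOfInv (n : ℕ) (g : G) : Set G :=
    {h | h • x₀ ∈ shadow x₀ (g⁻¹ • x₀) (dist x₀ (g⁻¹ • x₀) - ε * n)}
  have hbad (n : ℕ) : P {ω | um n ω ∈ shadowOfInv n (wm n ω)} ≤ ENNReal.ofReal (f (ε * n)) := by
    refine (hindep n).measure_mem_le (hwmeas n) (fun _ => .of_discrete) fun g => ?_
    rw [← Measure.map_apply (humeas n) .of_discrete, hlawum n]
    exact (hshadow _ _ _ g⁻¹ (by simp)).1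
  have hsplit (n : ℕ) :
      P {ω | dist x₀ (wm n ω • x₀) ≥ (l n : ℝ) + ε * n} ≤
        P {ω | gromovProd x₀ ((wm n ω * um n ω) • x₀) (wm n ω • x₀) ≥ (l n : ℝ)} +
          ENNReal.ofReal (f (ε * n)) := by
    refine (measure_mono fun ω hω => ?_).trans <|
      (measure_union_le _ _).trans (by gcongr; exact hbad n)
    exact (em _).imp_right fun hlt => mem_shadow_of_gromovProd_mul_smul_lt hω (not_le.1 hlt)
  have hεn : Tendsto (fun n : ℕ => ε * n) atTop atTop :=
    tendsto_natCast_atTop_atTop.const_mul_atTop hε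
  have herr : Tendsto (fun n : ℕ => ENNReal.ofReal (f (ε * n))) atTop (nhds 0) := by
    simpa using (ENNReal.tendsto_ofReal (hf.comp hεn))
  exact ENNReal.tendsto_nhds_one_of_le_add hprog herr (fun _ => prob_le_one) hsplit

theorem gromov_product_with_midpoint_large
    {G : Type*} [Group G] [Countable G] [MeasurableSpace G] [DiscreteMeasurableSpace G]
    {X : Type*} [MetricSpace X] (δ : ℝ)
    (hδ : ∀ x y z w : X, gromovProd w x z ≥ min (gromovProd w x y) (gromovProd w y z) - δ)
    [MulAction G X] (hisom : ∀ g : G, Isometry (fun x : X => g • x)) (x₀ : X)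
    {Ω : Type*} [MeasurableSpace Ω] (P : Measure Ω) [IsProbabilityMeasure P]
    (wm um : ℕ → Ω → G)
    (hwmeas : ∀ n, Measurable (wm n)) (humeas : ∀ n, Measurable (um n))
    (hindep : ∀ n, IndepFun (wm n) (um n) P)
    (μfam : ℕ → Measure G) (hμfam : ∀ j, IsProbabilityMeasure (μfam j))
    -- `wm n` is the walk at time `m = ⌊n/2⌋` and `um n` the independent increment with
    -- law `μ_{n-m}`
    (hlawwm : ∀ n, Measure.map (wm n) P = μfam (n / 2))
    (hlawum : ∀ n, Measure.map (um n) P = μfam (n - n / 2))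
    -- decay of shadows: both `μ_j` and `μ̌_j` give small measure to shadows with large
    -- distance parameter
    (f : ℝ → ℝ) (hf : Tendsto f atTop (nhds 0))
    (hshadow : ∀ (j : ℕ) (r R : ℝ) (g : G), dist x₀ (g • x₀) - R ≥ r →
      μfam j {h : G | h • x₀ ∈ shadow x₀ (g • x₀) R} ≤ ENNReal.ofReal (f r) ∧
      μfam j {h : G | h⁻¹ • x₀ ∈ shadow x₀ (g • x₀) R} ≤ ENNReal.ofReal (f r))
    (l : ℕ → ℕ) (ε : ℝ) (hε : 0 < ε)
    (hprog : Tendsto (fun n =>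
        P {ω | dist x₀ (wm n ω • x₀) ≥ (l n : ℝ) + ε * n}) atTop (nhds 1)) :
    Tendsto (fun n =>
        P {ω | gromovProd x₀ ((wm n ω * um n ω) • x₀) (wm n ω • x₀) ≥ (l n : ℝ)})
      atTop (nhds 1) :=
  gromov_product_with_midpoint_large_general hisom x₀ P wm um hwmeas humeas hindep μfam hlawum f hf
    hshadow l ε hε hprog
end
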